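/- Let β² be the centered quadratic B-spline on ℝ (the 3-fold convolution of the indicator of [−1/2, 1/2] with itself). For θ with cos θ ≠ 0 and sin θ ≠ 0, the x-ray projection of the separable tensor-product φ(x₁, x₂) = β²(x₁)β²(x₂) along angle θ equals the convolution of six rescaled rectangles: three of width |cos θ| and three of width |sin θ|, each normalized to unit mass, appropriately centered; consequently, it is a piecewise-polynomial function of degree 5, compactly supported in an interval of length 3(|cos θ| + |sin θ|), and integrates to 1. -/

import Mathlib

open MeasureTheory Real

/-- One-dimensional convolution. -/
noncomputable def conv (f g : ℝ → ℝ) : ℝ → ℝ :=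
  fun y => ∫ s : ℝ, f s * g (y - s)

/-- Iterated convolution of a nonempty list of functions. -/
noncomputable def multiConv : List (ℝ → ℝ) → (ℝ → ℝ)
  | [] => fun _ => 0
  | [f] => f
  | f :: g :: rest => conv f (multiConv (g :: rest))

/-- B-spline of degree 0: indicator of `[-1/2, 1/2]`. -/
noncomputable def bspline0 : ℝ → ℝ :=
  Set.indicator (Set.Icc (-(1 / 2 : ℝ)) (1 / 2)) 1

/-- Centered quadratic B-spline `β² = β⁰ ∗ β⁰ ∗ β⁰`. -/
noncomputable def bspline2 : ℝ → ℝ :=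
  conv bspline0 (conv bspline0 bspline0)

/-- X-ray transform of `f : ℝ² → ℝ` along angle `θ` and offset `y`. -/
noncomputable def xray (f : ℝ × ℝ → ℝ) (θ y : ℝ) : ℝ :=
  ∫ t : ℝ, f (t * Real.cos θ + y * Real.sin θ, t * Real.sin θ - y * Real.cos θ)

/-- Rectangle of width `w > 0` centered at `c`, normalized to unit mass. -/
noncomputable def crect (w c : ℝ) : ℝ → ℝ :=
  fun y => (1 / w) * Set.indicator (Set.Icc (c - w / 2) (c + w / 2)) 1 y

/-- scaling operator -/
noncomputable def S (a : ℝ) (F : ℝ → ℝ) : ℝ → ℝ := fun y => |a|⁻¹ * F (y / a)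

lemma integral_scale (G : ℝ → ℝ) {a : ℝ} (ha : a ≠ 0) (b : ℝ) :
    ∫ x : ℝ, G x = |a| * ∫ t : ℝ, G (a * t + b) := by
  have h1 : (∫ t : ℝ, G (a * t + b)) = ∫ t : ℝ, (fun u => G (u + b)) (a * t) := by
    simp
  rw [h1, Measure.integral_comp_mul_left (fun u => G (u + b)) a,
    integral_add_right_eq_self G b]
  rw [smul_eq_mul, abs_inv, ← mul_assoc, mul_inv_cancel₀ (by positivity), one_mul]

lemma conv_S {a : ℝ} (ha : a ≠ 0) (f g : ℝ → ℝ) :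
    conv (S a f) (S a g) = S a (conv f g) := by
  funext y
  unfold conv S
  rw [integral_scale (fun u => |a|⁻¹ * f (u / a) * (|a|⁻¹ * g ((y - u) / a))) ha 0,
    ← integral_const_mul]
  rw [mul_comm |a|⁻¹ (∫ s : ℝ, f s * g (y / a - s)), ← integral_mul_const]
  congr 1
  funext t
  have h1 : (a * t + 0) / a = t := by rw [add_zero, mul_div_cancel_left₀ t ha]
  have h2 : (y - (a * t + 0)) / a = y / a - t := by rw [add_zero, sub_div, mul_div_cancel_left₀ t ha]
  rw [h1, h2]
  have : |a| ≠ 0 := by positivity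
  field_simp

lemma S_bspline0 {a : ℝ} (ha : a ≠ 0) : S a bspline0 = crect |a| 0 := by
  funext y
  unfold S bspline0 crect
  have hab : (0:ℝ) < |a| := abs_pos.mpr ha
  have hmem : y / a ∈ Set.Icc (-(1 / 2 : ℝ)) (1 / 2) ↔ y ∈ Set.Icc (0 - |a| / 2) (0 + |a| / 2) := by
    rw [Set.mem_Icc, Set.mem_Icc, show -(1/2:ℝ) ≤ y/a ∧ y/a ≤ 1/2 ↔ |y/a| ≤ 1/2 from (abs_le).symm,
      show 0 - |a|/2 ≤ y ∧ y ≤ 0 + |a|/2 ↔ |y| ≤ |a|/2 by rw [abs_le]; constructor <;> rintro ⟨h1, h2⟩ <;> constructor <;> linarith]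
    rw [abs_div, div_le_iff₀ hab]
    constructor <;> intro h <;> linarith
  simp only [Set.indicator_apply, hmem]
  rcases em (y ∈ Set.Icc (0 - |a| / 2) (0 + |a| / 2)) with h | h <;>
    simp [h, one_div]

lemma xray_eq {θ : ℝ} (hc : Real.cos θ ≠ 0) (hs : Real.sin θ ≠ 0) (y : ℝ) :
    xray (fun x => bspline2 x.1 * bspline2 x.2) θ y
      = conv (S (-Real.cos θ) bspline2) (S (Real.sin θ) bspline2) y := by
  unfold xray conv S
  set c := Real.cos θ with hcdef
  set s := Real.sin θ with hsdef
  have hpy : s ^ 2 + c ^ 2 = 1 := by rw [hsdef, hcdef]; exact Real.sin_sq_add_cos_sq θ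
  clear_value c s
  have ha : -(c * s) ≠ 0 := by simp [hc, hs]
  rw [integral_scale
    (fun u => |(-c)|⁻¹ * bspline2 (u / -c) * (|s|⁻¹ * bspline2 ((y - u) / s)))
    ha (y * c ^ 2), ← integral_const_mul]
  congr 1
  funext t
  have h1 : (-(c * s) * t + y * c ^ 2) / -c = t * s - y * c := by
    rw [div_eq_iff (neg_ne_zero.mpr hc)]
    ring
  have h2 : (y - (-(c * s) * t + y * c ^ 2)) / s = t * c + y * s := by
    rw [div_eq_iff hs]
    linear_combination (-y) * hpy
  rw [h1, h2]
  have hcc : |c| ≠ 0 := by simpa using hc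
  have hss : |s| ≠ 0 := by simpa using hs
  rw [abs_neg, abs_mul]
  field_simp
  rw [abs_neg, mul_div_cancel_right₀ _ hcc]

open scoped Convolution

lemma conv_eq_convolution (f g : ℝ → ℝ) :
    conv f g = f ⋆[ContinuousLinearMap.mul ℝ ℝ, (volume : Measure ℝ)] g := by
  funext y
  simp [conv, convolution_def, ContinuousLinearMap.mul_apply']

lemma conv_integrable {f g : ℝ → ℝ} (hf : Integrable f) (hg : Integrable g) :
    Integrable (conv f g) := by
  rw [conv_eq_convolution]
  exact hf.integrable_convolution _ hg

lemma conv_bound {f g : ℝ → ℝ} {C : ℝ} (hf : Integrable f) (hgb : ∀ x, ‖g x‖ ≤ C) :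
    ∀ y, ‖conv f g y‖ ≤ (∫ x, ‖f x‖) * C := by
  intro y
  have hC : 0 ≤ C := le_trans (norm_nonneg _) (hgb 0)
  have h1 : ‖conv f g y‖ ≤ ∫ s, ‖f s‖ * C := by
    refine norm_integral_le_of_norm_le (hf.norm.mul_const C) (.of_forall fun s => ?_)
    rw [norm_mul]
    exact mul_le_mul_of_nonneg_left (hgb _) (norm_nonneg _)
  simpa [integral_mul_const] using h1

lemma conv_assoc {f g k : ℝ → ℝ} (hf : Integrable f) (hg : Integrable g)
    (hk : Integrable k) {C : ℝ} (hkb : ∀ x, ‖k x‖ ≤ C) :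
    conv (conv f g) k = conv f (conv g k) := by
  funext x₀
  simp only [conv_eq_convolution]
  refine convolution_assoc (ContinuousLinearMap.mul ℝ ℝ) (ContinuousLinearMap.mul ℝ ℝ)
    (ContinuousLinearMap.mul ℝ ℝ) (ContinuousLinearMap.mul ℝ ℝ)
    (fun x y z => mul_assoc x y z)
    hf.aestronglyMeasurable hg.aestronglyMeasurable hk.aestronglyMeasurable
    (hf.ae_convolution_exists _ hg) ((hg.norm).ae_convolution_exists _ hk.norm) ?_
  -- ConvolutionExistsAt ‖f‖ (‖g‖ ⋆ ‖k‖) x₀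
  unfold ConvolutionExistsAt
  set H := (fun x => ‖g x‖) ⋆[ContinuousLinearMap.mul ℝ ℝ, (volume : Measure ℝ)] (fun x => ‖k x‖)
    with hH
  have hHint : Integrable H := (hg.norm).integrable_convolution _ hk.norm
  have hHb : ∀ x, ‖H x‖ ≤ (∫ x, ‖g x‖) * C := by
    have := conv_bound (g := fun x => ‖k x‖) hg.norm
      (fun x => by simpa using hkb x)
    intro x
    have h2 := this x
    rw [conv_eq_convolution, ← hH] at h2
    simpa using h2
  have hmeas : AEStronglyMeasurable (fun t => H (x₀ - t)) (volume : Measure ℝ) := by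
    have : (fun t => H (x₀ - t)) = H ∘ (fun t => x₀ - t) := rfl
    rw [this]
    exact hHint.aestronglyMeasurable.comp_quasiMeasurePreserving
      (quasiMeasurePreserving_sub_left_of_right_invariant _ _)
  have := (hf.norm.bdd_mul (c := (∫ x, ‖g x‖) * C) hmeas (.of_forall fun t => hHb _))
  simp only [ContinuousLinearMap.mul_apply']
  exact this.congr (.of_forall fun t => by simp [mul_comm])

lemma crect_integrable {w : ℝ} (hw : 0 < w) (c : ℝ) : Integrable (crect w c) := by
  unfold crect
  refine Integrable.const_mul ?_ _
  rw [integrable_indicator_iff measurableSet_Icc]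
  exact integrableOn_const measure_Icc_lt_top.ne

lemma crect_bdd {w : ℝ} (hw : 0 < w) (c : ℝ) : ∀ y, ‖crect w c y‖ ≤ 1 / w := by
  intro y
  unfold crect
  rw [norm_mul]
  rcases em (y ∈ Set.Icc (c - w / 2) (c + w / 2)) with h | h
  · rw [Set.indicator_of_mem h]
    simp [abs_of_pos hw, le_refl]
  · rw [Set.indicator_of_notMem h]
    simp
    positivity

lemma crect_integral {w : ℝ} (hw : 0 < w) (c : ℝ) : (∫ y, crect w c y) = 1 := by
  unfold crect
  rw [integral_const_mul]
  have h := integral_indicator_const (μ := (volume : Measure ℝ)) (1:ℝ)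
    (measurableSet_Icc (a := c - w/2) (b := c + w/2))
  rw [show ((Set.Icc (c - w/2) (c + w/2)).indicator (1 : ℝ → ℝ))
      = (Set.Icc (c - w/2) (c + w/2)).indicator (fun _ => (1:ℝ)) from rfl, h]
  simp only [smul_eq_mul, mul_one, Real.volume_Icc]
  rw [Measure.real, Real.volume_Icc, show c + w / 2 - (c - w / 2) = w by ring, ENNReal.toReal_ofReal hw.le]
  field_simp

lemma integral_conv {f g : ℝ → ℝ} (hf : Integrable f) (hg : Integrable g) :
    (∫ y, conv f g y) = (∫ y, f y) * ∫ y, g y := by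
  rw [conv_eq_convolution]
  simpa using integral_convolution (ContinuousLinearMap.mul ℝ ℝ) hf hg

lemma conv_zero_outside {f g : ℝ → ℝ} {l₁ r₁ l₂ r₂ : ℝ}
    (hf : ∀ x ∉ Set.Icc l₁ r₁, f x = 0) (hg : ∀ x ∉ Set.Icc l₂ r₂, g x = 0) :
    ∀ y ∉ Set.Icc (l₁ + l₂) (r₁ + r₂), conv f g y = 0 := by
  intro y hy
  unfold conv
  rw [show (0:ℝ) = ∫ s : ℝ, (0:ℝ) by simp]
  congr 1
  funext s
  rcases em (s ∈ Set.Icc l₁ r₁) with h | h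
  · rw [hg (y - s) fun hmem => hy ?_, mul_zero]
    rw [Set.mem_Icc] at *
    constructor <;> linarith [h.1, h.2, hmem.1, hmem.2]
  · rw [hf s h, zero_mul]

lemma crect_zero_outside {w : ℝ} (c : ℝ) :
    ∀ y ∉ Set.Icc (c - w / 2) (c + w / 2), crect w c y = 0 := by
  intro y hy
  unfold crect
  rw [Set.indicator_of_notMem hy, mul_zero]

lemma conv_crect {w : ℝ} (hw : 0 < w) (c : ℝ) (F : ℝ → ℝ) (y : ℝ) :
    conv (crect w c) F y
      = (1 / w) * ∫ u in (y - c - w / 2)..(y - c + w / 2), F u := by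
  unfold conv crect
  simp_rw [mul_assoc]
  rw [integral_const_mul]
  congr 1
  have hind : ∀ s : ℝ, (Set.Icc (c - w/2) (c + w/2)).indicator 1 s * F (y - s)
      = (Set.Icc (c - w/2) (c + w/2)).indicator (fun s => F (y - s)) s := by
    intro s
    rcases em (s ∈ Set.Icc (c - w/2) (c + w/2)) with h | h <;>
      simp [Set.indicator_of_mem, Set.indicator_of_notMem, h]
  simp_rw [hind]
  rw [integral_indicator measurableSet_Icc, MeasureTheory.integral_Icc_eq_integral_Ioc,
    ← intervalIntegral.integral_of_le (by linarith), intervalIntegral.integral_comp_sub_left F y]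
  congr 1 <;> ring

open Polynomial in
noncomputable def pAnti (p : Polynomial ℝ) : Polynomial ℝ :=
  p.sum fun n a => C (a / (n + 1)) * X ^ (n + 1)

open Polynomial in
lemma pAnti_deriv (p : Polynomial ℝ) : (pAnti p).derivative = p := by
  unfold pAnti
  rw [Polynomial.sum_def, map_sum]
  have h : ∀ n ∈ p.support,
      Polynomial.derivative (C (p.coeff n / (n + 1)) * X ^ (n + 1))
        = C (p.coeff n) * X ^ n := by
    intro n _
    rw [Polynomial.derivative_C_mul_X_pow]
    have : ((n : ℝ) + 1) ≠ 0 := by positivity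
    simp only [Nat.add_sub_cancel, Nat.cast_add, Nat.cast_one]
    rw [div_mul_cancel₀ _ this]
  rw [Finset.sum_congr rfl h]
  have h2 := Polynomial.sum_C_mul_X_pow_eq p
  rwa [Polynomial.sum_def] at h2

open Polynomial in
lemma pAnti_natDegree (p : Polynomial ℝ) : (pAnti p).natDegree ≤ p.natDegree + 1 := by
  unfold pAnti
  rw [Polynomial.sum_def]
  refine Polynomial.natDegree_sum_le_of_forall_le _ _ fun n hn => ?_
  refine le_trans (Polynomial.natDegree_C_mul_le _ _) ?_
  rw [Polynomial.natDegree_X_pow]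
  exact Nat.add_le_add_right (Polynomial.le_natDegree_of_mem_supp n hn) 1

lemma integral_poly (p : Polynomial ℝ) (u v : ℝ) :
    ∫ x in u..v, p.eval x = (pAnti p).eval v - (pAnti p).eval u := by
  refine intervalIntegral.integral_eq_sub_of_hasDerivAt
    (f := fun x => (pAnti p).eval x) (fun x _ => ?_) ?_
  · have h := (pAnti p).hasDerivAt x
    rwa [pAnti_deriv] at h
  · exact p.continuous.intervalIntegrable u v

/-- Piecewise polynomial of degree at most `n` with knots `K`. -/
def PP (n : ℕ) (K : Finset ℝ) (F : ℝ → ℝ) : Prop :=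
  ∀ a b : ℝ, a < b → (∀ k ∈ K, k ∉ Set.Ioo a b) →
    ∃ p : Polynomial ℝ, p.natDegree ≤ n ∧ ∀ y ∈ Set.Ioo a b, F y = p.eval y

lemma PP_crect {w : ℝ} (hw : 0 < w) (c : ℝ) :
    PP 0 {c - w / 2, c + w / 2} (crect w c) := by
  intro a b hab hK
  have hl := hK (c - w / 2) (by simp)
  have hr := hK (c + w / 2) (by simp)
  rcases em (∃ y₀ ∈ Set.Ioo a b, y₀ ∈ Set.Icc (c - w / 2) (c + w / 2)) with ⟨y₀, hy₀, hy₀'⟩ | hn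
  · refine ⟨Polynomial.C (1 / w), by simp, fun y hy => ?_⟩
    have hymem : y ∈ Set.Icc (c - w / 2) (c + w / 2) := by
      rw [Set.mem_Icc]
      simp only [Set.mem_Ioo, Set.mem_Icc] at hy₀ hy₀' hy
      constructor
      · by_contra hlt
        exact hl ⟨by linarith, by linarith⟩
      · by_contra hgt
        exact hr ⟨by linarith, by linarith⟩
    unfold crect
    rw [Set.indicator_of_mem hymem]
    simp
  · refine ⟨0, by simp, fun y hy => ?_⟩
    have : y ∉ Set.Icc (c - w / 2) (c + w / 2) := fun hmem => hn ⟨y, hy, hmem⟩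
    unfold crect
    rw [Set.indicator_of_notMem this]
    simp

open Polynomial in
lemma PP_conv {w : ℝ} (hw : 0 < w) (c : ℝ) {F : ℝ → ℝ} {n : ℕ} {K : Finset ℝ}
    (hF : Integrable F) (h : PP n K F) :
    PP (n + 1) (K.image (· + (c + w / 2)) ∪ K.image (· + (c - w / 2)))
      (conv (crect w c) F) := by
  intro a b hab hK
  obtain ⟨α, hα⟩ : ∃ α : ℝ, α = -c - w / 2 := ⟨_, rfl⟩
  obtain ⟨β, hβ⟩ : ∃ β : ℝ, β = -c + w / 2 := ⟨_, rfl⟩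
  have hKα : ∀ k ∈ K, k ∉ Set.Ioo (a + α) (b + α) := by
    intro k hk hmem
    refine hK (k + (c + w / 2)) ?_ ?_
    · exact Finset.mem_union_left _ (Finset.mem_image.mpr ⟨k, hk, rfl⟩)
    · simp only [Set.mem_Ioo] at hmem ⊢
      constructor <;> [linarith [hmem.1, hα]; linarith [hmem.2, hα]]
  have hKβ : ∀ k ∈ K, k ∉ Set.Ioo (a + β) (b + β) := by
    intro k hk hmem
    refine hK (k + (c - w / 2)) ?_ ?_
    · exact Finset.mem_union_right _ (Finset.mem_image.mpr ⟨k, hk, rfl⟩)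
    · simp only [Set.mem_Ioo] at hmem ⊢
      constructor <;> [linarith [hmem.1, hβ]; linarith [hmem.2, hβ]]
  obtain ⟨p₁, hp₁d, hp₁⟩ := h (a + α) (b + α) (by linarith) hKα
  obtain ⟨p₂, hp₂d, hp₂⟩ := h (a + β) (b + β) (by linarith) hKβ
  set y₀ := (a + b) / 2 with hy₀def
  have hy₀ : y₀ ∈ Set.Ioo a b := by constructor <;> [simp [hy₀def]; simp [hy₀def]] <;> linarith
  set M : ℝ := (∫ u in (y₀ + α)..(y₀ + β), F u) - (pAnti p₂).eval (y₀ + β)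
      + (pAnti p₁).eval (y₀ + α) with hM
  refine ⟨Polynomial.C (1 / w) *
    (Polynomial.C M + (pAnti p₂).comp (X + C β) - (pAnti p₁).comp (X + C α)), ?_, ?_⟩
  · refine le_trans (natDegree_C_mul_le _ _) ?_
    refine le_trans (natDegree_sub_le _ _) ?_
    rw [max_le_iff]
    constructor
    · refine le_trans (natDegree_add_le _ _) ?_
      rw [max_le_iff]
      refine ⟨by simp, ?_⟩
      refine le_trans (natDegree_comp_le) ?_
      rw [natDegree_X_add_C]
      calc (pAnti p₂).natDegree * 1 = (pAnti p₂).natDegree := mul_one _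
        _ ≤ p₂.natDegree + 1 := pAnti_natDegree _
        _ ≤ n + 1 := by omega
    · refine le_trans (natDegree_comp_le) ?_
      rw [natDegree_X_add_C]
      calc (pAnti p₁).natDegree * 1 = (pAnti p₁).natDegree := mul_one _
        _ ≤ p₁.natDegree + 1 := pAnti_natDegree _
        _ ≤ n + 1 := by omega
  · intro y hy
    rw [conv_crect hw c F y]
    have he1 : y - c - w / 2 = y + α := by rw [hα]; ring
    have he2 : y - c + w / 2 = y + β := by rw [hβ]; ring
    rw [he1, he2]
    have hii : ∀ u v : ℝ, IntervalIntegrable F volume u v := fun u v => hF.intervalIntegrable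
    have hsplit : (∫ u in (y + α)..(y + β), F u)
        = (∫ u in (y + α)..(y₀ + α), F u) + (∫ u in (y₀ + α)..(y₀ + β), F u)
          + (∫ u in (y₀ + β)..(y + β), F u) := by
      rw [intervalIntegral.integral_add_adjacent_intervals (hii _ _) (hii _ _),
        intervalIntegral.integral_add_adjacent_intervals (hii _ _) (hii _ _)]
    have hsub1 : Set.uIcc (y + α) (y₀ + α) ⊆ Set.Ioo (a + α) (b + α) := by
      refine Set.OrdConnected.uIcc_subset Set.ordConnected_Ioo ?_ ?_ <;>
        simp only [Set.mem_Ioo] at hy hy₀ ⊢ <;>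
        constructor <;> linarith [hy.1, hy.2, hy₀.1, hy₀.2]
    have hsub2 : Set.uIcc (y₀ + β) (y + β) ⊆ Set.Ioo (a + β) (b + β) := by
      refine Set.OrdConnected.uIcc_subset Set.ordConnected_Ioo ?_ ?_ <;>
        simp only [Set.mem_Ioo] at hy hy₀ ⊢ <;>
        constructor <;> linarith [hy.1, hy.2, hy₀.1, hy₀.2]
    have ht1 : (∫ u in (y + α)..(y₀ + α), F u)
        = (pAnti p₁).eval (y₀ + α) - (pAnti p₁).eval (y + α) := by
      rw [intervalIntegral.integral_congr (g := fun x => p₁.eval x)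
        (fun x hx => hp₁ x (hsub1 hx))]
      exact integral_poly p₁ _ _
    have ht3 : (∫ u in (y₀ + β)..(y + β), F u)
        = (pAnti p₂).eval (y + β) - (pAnti p₂).eval (y₀ + β) := by
      rw [intervalIntegral.integral_congr (g := fun x => p₂.eval x)
        (fun x hx => hp₂ x (hsub2 hx))]
      exact integral_poly p₂ _ _
    rw [hsplit, ht1, ht3]
    simp only [eval_mul, eval_add, eval_sub, eval_C, eval_comp, eval_X, hM]
    ring

/-- X-ray projection of the tensor-product quadratic B-spline: it is the
convolution of six unit-mass rectangles (three of width `|cos θ|`, three of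
width `|sin θ|`, appropriately centered), it is piecewise polynomial of degree
at most 5, compactly supported in an interval of length `3(|cos θ| + |sin θ|)`,
and it integrates to 1. -/
theorem bspline2_projection (θ : ℝ) (hc : Real.cos θ ≠ 0) (hs : Real.sin θ ≠ 0) :
    (∃ c : Fin 6 → ℝ, ∀ y : ℝ,
      xray (fun x => bspline2 x.1 * bspline2 x.2) θ y =
        multiConv
          [crect |Real.cos θ| (c 0), crect |Real.cos θ| (c 1),
           crect |Real.cos θ| (c 2), crect |Real.sin θ| (c 3),
           crect |Real.sin θ| (c 4), crect |Real.sin θ| (c 5)] y) ∧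
    (∃ knots : Finset ℝ, ∀ a b : ℝ, a < b → (∀ k ∈ knots, k ∉ Set.Ioo a b) →
      ∃ p : Polynomial ℝ, p.degree ≤ 5 ∧
        ∀ y ∈ Set.Ioo a b,
          xray (fun x => bspline2 x.1 * bspline2 x.2) θ y = p.eval y) ∧
    (∃ L : ℝ, ∀ y : ℝ,
      y ∉ Set.Icc L (L + 3 * (|Real.cos θ| + |Real.sin θ|)) →
        xray (fun x => bspline2 x.1 * bspline2 x.2) θ y = 0) ∧
    (∫ y : ℝ, xray (fun x => bspline2 x.1 * bspline2 x.2) θ y) = 1 := by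
  have hcp : (0:ℝ) < |Real.cos θ| := abs_pos.mpr hc
  have hsp : (0:ℝ) < |Real.sin θ| := abs_pos.mpr hs
  set r := crect |Real.cos θ| 0 with hrdef
  set q := crect |Real.sin θ| 0 with hqdef
  have hnc : -Real.cos θ ≠ 0 := neg_ne_zero.mpr hc
  -- rewriting the scaled B-splines as triple convolutions of rectangles
  have hSc : S (-Real.cos θ) bspline2 = conv r (conv r r) := by
    rw [show bspline2 = conv bspline0 (conv bspline0 bspline0) from rfl,
      ← conv_S hnc, ← conv_S hnc, S_bspline0 hnc, abs_neg, hrdef]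
  have hSs : S (Real.sin θ) bspline2 = conv q (conv q q) := by
    rw [show bspline2 = conv bspline0 (conv bspline0 bspline0) from rfl,
      ← conv_S hs, ← conv_S hs, S_bspline0 hs, hqdef]
  -- integrability and bounds
  have hri : Integrable r := crect_integrable hcp 0
  have hqi : Integrable q := crect_integrable hsp 0
  have hrri : Integrable (conv r r) := conv_integrable hri hri
  have hqqi : Integrable (conv q q) := conv_integrable hqi hqi
  have hQi : Integrable (conv q (conv q q)) := conv_integrable hqi hqqi
  have hqq_bdd : ∀ x, ‖conv q q x‖ ≤ (∫ x, ‖q x‖) * (1 / |Real.sin θ|) :=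
    conv_bound hqi (crect_bdd hsp 0)
  have hQ_bdd : ∀ x, ‖conv q (conv q q) x‖
      ≤ (∫ x, ‖q x‖) * ((∫ x, ‖q x‖) * (1 / |Real.sin θ|)) :=
    conv_bound hqi hqq_bdd
  -- the main identity
  have hmain : ∀ y, xray (fun x => bspline2 x.1 * bspline2 x.2) θ y
      = conv r (conv r (conv r (conv q (conv q q)))) y := by
    intro y
    rw [xray_eq hc hs y, hSc, hSs, conv_assoc hri hrri hQi hQ_bdd,
      conv_assoc hri hri hQi hQ_bdd]
  refine ⟨⟨fun _ => 0, fun y => ?_⟩, ?_, ?_, ?_⟩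
  · simp only [multiConv]
    exact hmain y
  · -- piecewise polynomial of degree ≤ 5
    have hchain : ∃ K : Finset ℝ, PP 5 K (conv r (conv r (conv r (conv q (conv q q))))) := by
      have h0 := PP_crect hsp 0
      rw [← hqdef] at h0
      have h1 := PP_conv hsp 0 hqi h0
      rw [← hqdef] at h1
      have h2 := PP_conv hsp 0 hqqi h1
      rw [← hqdef] at h2
      have h3 := PP_conv hcp 0 hQi h2
      rw [← hrdef] at h3
      have h4 := PP_conv hcp 0 (conv_integrable hri hQi) h3
      rw [← hrdef] at h4
      have h5 := PP_conv hcp 0 (conv_integrable hri (conv_integrable hri hQi)) h4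
      rw [← hrdef] at h5
      exact ⟨_, h5⟩
    obtain ⟨K, hK5⟩ := hchain
    refine ⟨K, fun a b hab hfree => ?_⟩
    obtain ⟨p, hpd, hpe⟩ := hK5 a b hab hfree
    refine ⟨p, ?_, fun y hy => by rw [hmain y]; exact hpe y hy⟩
    exact_mod_cast Polynomial.degree_le_of_natDegree_le hpd
  · -- compact support
    have zq : ∀ x ∉ Set.Icc ((0:ℝ) - |Real.sin θ| / 2) (0 + |Real.sin θ| / 2), q x = 0 := by
      rw [hqdef]; exact crect_zero_outside 0
    have zr : ∀ x ∉ Set.Icc ((0:ℝ) - |Real.cos θ| / 2) (0 + |Real.cos θ| / 2), r x = 0 := by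
      rw [hrdef]; exact crect_zero_outside 0
    have z3 := conv_zero_outside zr (conv_zero_outside zr (conv_zero_outside zr
      (conv_zero_outside zq (conv_zero_outside zq zq))))
    refine ⟨(0 - |Real.cos θ| / 2) + ((0 - |Real.cos θ| / 2) + ((0 - |Real.cos θ| / 2)
      + ((0 - |Real.sin θ| / 2) + ((0 - |Real.sin θ| / 2) + (0 - |Real.sin θ| / 2))))),
      fun y hy => ?_⟩
    rw [hmain y]
    apply z3
    intro hmem
    rw [Set.mem_Icc] at hmem
    exact hy (Set.mem_Icc.mpr ⟨by linarith [hmem.1], by linarith [hmem.2]⟩)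
  · -- total mass 1
    rw [integral_congr_ae (Filter.Eventually.of_forall hmain),
      integral_conv hri (conv_integrable hri (conv_integrable hri hQi)),
      integral_conv hri (conv_integrable hri hQi),
      integral_conv hri hQi, integral_conv hqi hqqi, integral_conv hqi hqi,
      hrdef, hqdef, crect_integral hcp 0, crect_integral hsp 0]
    norm_num
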